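/- For mean-zero L² random variables Y, W_Z, W_Y, Z, U, the regression coefficient β_{w_z} := Cov(W_Z^{⊥W_Y,U,Z}, Y^{⊥W_Y,U,Z}) / Var(W_Z^{⊥W_Y,U,Z}) satisfies β_{w_z} = R_{Y∼W_Z|W_Y,Z,U} · sqrt( [Var(Y)/Var(W_Z)] · (1 − R²_{Y∼U|W_Y,Z})(1 − R²_{Y∼W_Y,Z}) / [ (1 − R²_{W_Z∼U|W_Y,Z})(1 − R²_{W_Z∼W_Y,Z}) ] ). -/

import Mathlib

open Submodule RealInnerProductSpace

/-- Residual of `A` after orthogonal projection onto the span of the finite set `S`. -/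
noncomputable def resid {H : Type*} [NormedAddCommGroup H] [InnerProductSpace ℝ H]
    [CompleteSpace H] (A : H) (S : Set H) (hS : S.Finite) : H :=
  haveI := hS.to_subtype
  haveI : FiniteDimensional ℝ (span ℝ S) := FiniteDimensional.span_of_finite ℝ hS
  A - (orthogonalProjection (span ℝ S) A : H)

/-- Correlation of two (mean-zero) random variables modeled as Hilbert-space vectors. -/
noncomputable def corr {H : Type*} [NormedAddCommGroup H] [InnerProductSpace ℝ H]
    (a b : H) : ℝ := ⟪a, b⟫ / (‖a‖ * ‖b‖)

/-- Squared multiple correlation `R²_{A∼S} = 1 − Var(A^{⊥S})/Var(A)`. -/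
noncomputable def R2m {H : Type*} [NormedAddCommGroup H] [InnerProductSpace ℝ H]
    [CompleteSpace H] (A : H) (S : Set H) (hS : S.Finite) : ℝ :=
  1 - ⟪resid A S hS, resid A S hS⟫ / ⟪A, A⟫

/-!
Write `S = {W_Y, Z}` and `A^⊥` for residuals. Adjoining `U` to the regressors replaces `A^{⊥S}`
by its component orthogonal to `U^{⊥S}` (Frisch–Waugh–Lovell), so
`‖A^{⊥S,U}‖² = ‖A^{⊥S}‖² (1 - R²_{A∼U|S})`, while `‖A^{⊥S}‖² = ‖A‖² (1 - R²_{A∼S})`.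
Hence the radicand is `‖Y^{⊥S,U}‖² / ‖W_Z^{⊥S,U}‖²`, and the claim reduces to the fact that a
regression coefficient is the correlation times the ratio of the standard deviations.
-/

section InnerProduct

variable {H : Type*} [NormedAddCommGroup H] [InnerProductSpace ℝ H]

theorem norm_sub_starProjection_singleton_sq (a b : H) :
    ‖a - (ℝ ∙ b).starProjection a‖ ^ 2 = ‖a‖ ^ 2 * (1 - corr a b ^ 2) := by
  rcases eq_or_ne a 0 with rfl | ha
  · simp
  rcases eq_or_ne b 0 with rfl | hb
  · simp [corr]
  have ha' : ‖a‖ ≠ 0 := norm_ne_zero_iff.2 ha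
  have hb' : ‖b‖ ≠ 0 := norm_ne_zero_iff.2 hb
  rw [starProjection_singleton, RCLike.ofReal_real_eq_id, id, norm_sub_sq_real,
    inner_smul_right, norm_smul, Real.norm_eq_abs, mul_pow, sq_abs, corr, real_inner_comm b a]
  field_simp
  ring

theorem inner_div_inner_self_eq_corr_mul (a b : H) :
    ⟪a, b⟫ / ⟪a, a⟫ = corr b a * (‖b‖ / ‖a‖) := by
  rcases eq_or_ne a 0 with rfl | ha
  · simp
  rcases eq_or_ne b 0 with rfl | hb
  · simp
  have ha' : ‖a‖ ≠ 0 := norm_ne_zero_iff.2 ha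
  have hb' : ‖b‖ ≠ 0 := norm_ne_zero_iff.2 hb
  rw [corr, real_inner_self_eq_norm_sq, real_inner_comm b a]
  field_simp

end InnerProduct

section Residual

variable {H : Type*} [NormedAddCommGroup H] [InnerProductSpace ℝ H] [CompleteSpace H]

theorem sub_resid_mem_span (A : H) (S : Set H) (hS : S.Finite) :
    A - resid A S hS ∈ span ℝ S := by
  simp [resid]

theorem resid_mem_orthogonal (A : H) (S : Set H) (hS : S.Finite) :
    resid A S hS ∈ (span ℝ S)ᗮ := by
  have := hS.to_subtype
  have : FiniteDimensional ℝ (span ℝ S) := FiniteDimensional.span_of_finite ℝ hS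
  exact sub_starProjection_mem_orthogonal A

theorem resid_eq_of_sub_mem_of_mem_orthogonal {A r : H} {S : Set H} (hS : S.Finite)
    (hmem : A - r ∈ span ℝ S) (horth : r ∈ (span ℝ S)ᗮ) : resid A S hS = r := by
  have := hS.to_subtype
  have : FiniteDimensional ℝ (span ℝ S) := FiniteDimensional.span_of_finite ℝ hS
  have hproj : (span ℝ S).starProjection A = A - r :=
    eq_starProjection_of_mem_orthogonal hmem (by rwa [sub_sub_cancel])
  change A - (span ℝ S).starProjection A = r
  rw [hproj, sub_sub_cancel]

theorem resid_insert (A U : H) (S : Set H) (hS : S.Finite) :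
    resid A (insert U S) (hS.insert U) =
      resid A S hS - (ℝ ∙ resid U S hS).starProjection (resid A S hS) := by
  set rA := resid A S hS
  set rU := resid U S hS
  have hS_le : span ℝ S ≤ span ℝ (insert U S) := span_mono (Set.subset_insert U S)
  apply resid_eq_of_sub_mem_of_mem_orthogonal
  · have hrU : rU ∈ span ℝ (insert U S) := by
      simpa using sub_mem (subset_span (Set.mem_insert U S)) (hS_le (sub_resid_mem_span U S hS))
    rw [sub_sub_eq_add_sub, add_sub_right_comm]
    exact add_mem (hS_le (sub_resid_mem_span A S hS))
      ((span_singleton_le_iff_mem _ _).2 hrU (coe_mem _))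
  · have hle : span ℝ (insert U S) ≤ span ℝ S ⊔ ℝ ∙ rU := by
      rw [span_insert]
      refine sup_le ((span_singleton_le_iff_mem _ _).2 ?_) le_sup_left
      rw [← sub_add_cancel U rU]
      exact add_mem (mem_sup_left (sub_resid_mem_span U S hS))
        (mem_sup_right (mem_span_singleton_self rU))
    refine orthogonal_le hle ?_
    rw [← inf_orthogonal]
    refine ⟨sub_mem (resid_mem_orthogonal A S hS) ?_, sub_starProjection_mem_orthogonal rA⟩
    exact (span_singleton_le_iff_mem _ _).2 (resid_mem_orthogonal U S hS) (coe_mem _)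

theorem norm_resid_insert_sq (A U : H) (S : Set H) (hS : S.Finite) :
    ‖resid A (insert U S) (hS.insert U)‖ ^ 2 =
      ‖resid A S hS‖ ^ 2 * (1 - corr (resid A S hS) (resid U S hS) ^ 2) := by
  rw [resid_insert, norm_sub_starProjection_singleton_sq]

theorem norm_sq_mul_one_sub_R2m (A : H) (S : Set H) (hS : S.Finite) :
    ‖A‖ ^ 2 * (1 - R2m A S hS) = ‖resid A S hS‖ ^ 2 := by
  rcases eq_or_ne A 0 with rfl | hA
  · have hresid : resid 0 S hS = 0 :=
      resid_eq_of_sub_mem_of_mem_orthogonal hS (by simp) (zero_mem _)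
    simp [hresid]
  rw [R2m, real_inner_self_eq_norm_sq, real_inner_self_eq_norm_sq]
  field_simp
  ring

end Residual

theorem stmt_12_general {H : Type*} [NormedAddCommGroup H] [InnerProductSpace ℝ H] [CompleteSpace H]
    (Y WZ WY Z U : H)
    (βwz : ℝ)
    (hβwz : βwz = ⟪resid WZ {WY, U, Z} (Set.toFinite _), resid Y {WY, U, Z} (Set.toFinite _)⟫ /
                    ⟪resid WZ {WY, U, Z} (Set.toFinite _), resid WZ {WY, U, Z} (Set.toFinite _)⟫) :
    βwz = corr (resid Y {WY, Z, U} (Set.toFinite _)) (resid WZ {WY, Z, U} (Set.toFinite _)) *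
      Real.sqrt ((⟪Y, Y⟫ / ⟪WZ, WZ⟫) *
        ((1 - (corr (resid Y {WY, Z} (Set.toFinite _))
                 (resid U {WY, Z} (Set.toFinite _)))^2) *
         (1 - R2m Y {WY, Z} (Set.toFinite _))) /
        ((1 - (corr (resid WZ {WY, Z} (Set.toFinite _))
                 (resid U {WY, Z} (Set.toFinite _)))^2) *
         (1 - R2m WZ {WY, Z} (Set.toFinite _)))) := by
  have hS : ({WY, Z} : Set H).Finite := Set.toFinite _
  have hUZ : ({WY, U, Z} : Set H) = insert U {WY, Z} := Set.insert_comm WY U {Z}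
  have hZU : ({WY, Z, U} : Set H) = insert U {WY, Z} := by
    rw [Set.pair_comm Z U, Set.insert_comm]
  simp only [hUZ, hZU] at hβwz ⊢
  have hratio : (⟪Y, Y⟫ / ⟪WZ, WZ⟫) *
        ((1 - corr (resid Y {WY, Z} hS) (resid U {WY, Z} hS) ^ 2) * (1 - R2m Y {WY, Z} hS)) /
        ((1 - corr (resid WZ {WY, Z} hS) (resid U {WY, Z} hS) ^ 2) * (1 - R2m WZ {WY, Z} hS)) =
      (‖resid Y (insert U {WY, Z}) (hS.insert U)‖ /
        ‖resid WZ (insert U {WY, Z}) (hS.insert U)‖) ^ 2 := by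
    rw [div_pow, norm_resid_insert_sq Y U _ hS, norm_resid_insert_sq WZ U _ hS,
      ← norm_sq_mul_one_sub_R2m Y, ← norm_sq_mul_one_sub_R2m WZ, real_inner_self_eq_norm_sq,
      real_inner_self_eq_norm_sq]
    simp only [div_eq_mul_inv, mul_inv]
    ring
  rw [hβwz, hratio, Real.sqrt_sq (by positivity), inner_div_inner_self_eq_corr_mul]

/-- Equation (beta_wz_r2_1) in the proof of Theorem 1: the partial regression coefficient
`β_{w_z} = Cov(W_Z^{⊥W_Y,U,Z}, Y^{⊥W_Y,U,Z}) / Var(W_Z^{⊥W_Y,U,Z})` satisfies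
`β_{w_z} = R_{Y∼W_Z|W_Y,Z,U} · √( [Var(Y)/Var(W_Z)] ·
  (1 − R²_{Y∼U|W_Y,Z})(1 − R²_{Y∼W_Y,Z}) / [(1 − R²_{W_Z∼U|W_Y,Z})(1 − R²_{W_Z∼W_Y,Z})] )`. -/
theorem stmt_12 {H : Type*} [NormedAddCommGroup H] [InnerProductSpace ℝ H] [CompleteSpace H]
    (Y WZ WY Z U : H)
    (hv1 : resid WZ {WY, U, Z} (Set.toFinite _) ≠ 0)
    (hv2 : resid Y {WY, U, Z} (Set.toFinite _) ≠ 0)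
    (hv3 : resid Y {WY, Z} (Set.toFinite _) ≠ 0)
    (hv4 : resid U {WY, Z} (Set.toFinite _) ≠ 0)
    (hv5 : resid WZ {WY, Z} (Set.toFinite _) ≠ 0)
    (hvarY : 0 < ⟪Y, Y⟫) (hvarWZ : 0 < ⟪WZ, WZ⟫)
    (hd1 : 0 < 1 - (corr (resid WZ {WY, Z} (Set.toFinite _))
                      (resid U {WY, Z} (Set.toFinite _)))^2)
    (hd2 : 0 < 1 - R2m WZ {WY, Z} (Set.toFinite _))
    (βwz : ℝ)
    (hβwz : βwz = ⟪resid WZ {WY, U, Z} (Set.toFinite _), resid Y {WY, U, Z} (Set.toFinite _)⟫ /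
                    ⟪resid WZ {WY, U, Z} (Set.toFinite _), resid WZ {WY, U, Z} (Set.toFinite _)⟫) :
    βwz = corr (resid Y {WY, Z, U} (Set.toFinite _)) (resid WZ {WY, Z, U} (Set.toFinite _)) *
      Real.sqrt ((⟪Y, Y⟫ / ⟪WZ, WZ⟫) *
        ((1 - (corr (resid Y {WY, Z} (Set.toFinite _))
                 (resid U {WY, Z} (Set.toFinite _)))^2) *
         (1 - R2m Y {WY, Z} (Set.toFinite _))) /
        ((1 - (corr (resid WZ {WY, Z} (Set.toFinite _))
                 (resid U {WY, Z} (Set.toFinite _)))^2) *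
         (1 - R2m WZ {WY, Z} (Set.toFinite _)))) :=
  stmt_12_general Y WZ WY Z U βwz hβwz
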